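/- arXiv:2203.05727 — 9 statements merged into one kernel-verified Lean document; each statement's English description precedes it below -/
import Mathlib

section
/- Let K be a finite abstract simplicial complex, 𝒱 a multivector field on K, and S ⊆ K an invariant set under 𝒱. Then S is an isolated invariant set if and only if S is convex and 𝒱-compatible. -/
open scoped Classical

namespace CDS

variable {α : Type*} [DecidableEq α]

/-- A finite abstract simplicial complex: a finite collection of nonempty finite
sets (simplices) closed under taking nonempty subsets. -/
def IsComplex (K : Finset (Finset α)) : Prop :=
  (∀ σ ∈ K, σ.Nonempty) ∧ ∀ σ ∈ K, ∀ τ : Finset α, τ ⊆ σ → τ.Nonempty → τ ∈ K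

/-- The closure of `A` in `K`. -/
def cl (K : Finset (Finset α)) (A : Set (Finset α)) : Set (Finset α) :=
  {σ | σ ∈ K ∧ ∃ τ ∈ A, σ ⊆ τ}

/-- `A` is closed in `K`. -/
def IsClosedIn (K : Finset (Finset α)) (A : Set (Finset α)) : Prop :=
  A = cl K A

/-- The mouth of `A` in `K`. -/
def mo (K : Finset (Finset α)) (A : Set (Finset α)) : Set (Finset α) :=
  cl K A \ A

/-- `A` is convex with respect to the face poset of `K`. -/
def IsConvex (K : Finset (Finset α)) (A : Set (Finset α)) : Prop :=
  ∀ σ ∈ A, ∀ τ ∈ A, ∀ ρ : Finset α, ρ ∈ K → σ ⊆ ρ → ρ ⊆ τ → ρ ∈ A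

/-- A multivector field on `K`: a partition of `K` into convex subsets
(multivectors). -/
structure MVF (K : Finset (Finset α)) where
  vecs : Set (Set (Finset α))
  sub : ∀ V ∈ vecs, V ⊆ (K : Set (Finset α))
  convex : ∀ V ∈ vecs, IsConvex K V
  nonempty : ∀ V ∈ vecs, V.Nonempty
  cover : ∀ σ ∈ K, ∃ V ∈ vecs, σ ∈ V
  disjoint : ∀ V ∈ vecs, ∀ W ∈ vecs, (V ∩ W).Nonempty → V = W

variable {K : Finset (Finset α)}

/-- `[σ]_𝒱`, the multivector of `𝒱` containing `σ`. -/
def mv (𝒱 : MVF K) (σ : Finset α) : Set (Finset α) :=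
  ⋃₀ {V | V ∈ 𝒱.vecs ∧ σ ∈ V}

/-- The induced multivalued map `F_𝒱` on simplices. -/
def Fv (𝒱 : MVF K) (σ : Finset α) : Set (Finset α) :=
  cl K {σ} ∪ mv 𝒱 σ

/-- `F_𝒱` applied to a set. -/
def Fs (𝒱 : MVF K) (A : Set (Finset α)) : Set (Finset α) :=
  ⋃ σ ∈ A, Fv 𝒱 σ

/-- `ρ` is a path of length `n` in `N`. -/
def IsPathIn (𝒱 : MVF K) (N : Set (Finset α)) (n : ℕ) (ρ : ℕ → Finset α) : Prop :=
  (∀ i < n, ρ (i + 1) ∈ Fv 𝒱 (ρ i)) ∧ ∀ i ≤ n, ρ i ∈ N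

/-- `ρ` is a (full) solution. -/
def IsSolution (𝒱 : MVF K) (ρ : ℤ → Finset α) : Prop :=
  ∀ i : ℤ, ρ (i + 1) ∈ Fv 𝒱 (ρ i)

/-- The mod 2 simplicial boundary operator (summing over faces in `K`). -/
def bdry (K : Finset (Finset α)) (c : Finset α → ZMod 2) (τ : Finset α) : ZMod 2 :=
  ∑ σ ∈ K, if τ ⊆ σ ∧ σ.card = τ.card + 1 then c σ else 0

/-- Relative `n`-chains of the pair `(P, E)`: mod 2 chains supported on
`(n+1)`-element simplices of `P \ E`. -/
def chains (P E : Set (Finset α)) (n : ℕ) : Set (Finset α → ZMod 2) :=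
  {c | ∀ σ, c σ ≠ 0 → σ ∈ P \ E ∧ σ.card = n + 1}

/-- The relative boundary operator of the pair `(P, E)`. -/
noncomputable def relBdry (K : Finset (Finset α)) (P E : Set (Finset α))
    (c : Finset α → ZMod 2) : Finset α → ZMod 2 :=
  (P \ E).indicator (bdry K c)

/-- The relative simplicial homology (with ℤ/2 coefficients) of the pair
`(P, E)` is nonzero: in some dimension there is a relative cycle that is not a
relative boundary. -/
def HasNonzeroHomology (K : Finset (Finset α)) (P E : Set (Finset α)) : Prop :=
  ∃ (n : ℕ) (c : Finset α → ZMod 2), c ∈ chains P E n ∧ relBdry K P E c = 0 ∧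
    ∀ d ∈ chains P E (n + 1), relBdry K P E d ≠ c

/-- A multivector `V` is critical if `H(cl V, mo V) ≠ 0`. -/
def IsCritical (K : Finset (Finset α)) (V : Set (Finset α)) : Prop :=
  HasNonzeroHomology K (cl K V) (mo K V)

/-- Essential solutions. -/
def IsEssential (𝒱 : MVF K) (ρ : ℤ → Finset α) : Prop :=
  IsSolution 𝒱 ρ ∧ ∀ i : ℤ, ¬ IsCritical K (mv 𝒱 (ρ i)) →
    (∃ j, j < i ∧ mv 𝒱 (ρ j) ≠ mv 𝒱 (ρ i)) ∧
    (∃ j, i < j ∧ mv 𝒱 (ρ j) ≠ mv 𝒱 (ρ i))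

/-- The invariant part of `A`: all simplices through which an essential
solution with values in `A` passes. -/
def invPart (𝒱 : MVF K) (A : Set (Finset α)) : Set (Finset α) :=
  {σ | ∃ ρ : ℤ → Finset α, IsEssential 𝒱 ρ ∧ (∀ i, ρ i ∈ A) ∧ ∃ i, ρ i = σ}

/-- `S` is an invariant set. -/
def IsInvariantSet (𝒱 : MVF K) (S : Set (Finset α)) : Prop :=
  invPart 𝒱 S = S

/-- The closed set `N` isolates `S`. -/
def Isolates (𝒱 : MVF K) (N S : Set (Finset α)) : Prop :=
  IsClosedIn K N ∧ Fs 𝒱 S ⊆ N ∧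
    ∀ (n : ℕ) (ρ : ℕ → Finset α), IsPathIn 𝒱 N n ρ → ρ 0 ∈ S → ρ n ∈ S →
      ∀ i ≤ n, ρ i ∈ S

/-- `S` is an isolated invariant set. -/
def IsIsolatedInvariantSet (𝒱 : MVF K) (S : Set (Finset α)) : Prop :=
  IsInvariantSet 𝒱 S ∧ ∃ N, Isolates 𝒱 N S

/-- `A` is `𝒱`-compatible: a union of multivectors of `𝒱`. -/
def IsCompatible (𝒱 : MVF K) (A : Set (Finset α)) : Prop :=
  ∃ R ⊆ 𝒱.vecs, A = ⋃₀ R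

/-- `(P, E)` is an index pair for `S` under `𝒱`. -/
def IsIndexPair (𝒱 : MVF K) (S P E : Set (Finset α)) : Prop :=
  IsClosedIn K P ∧ IsClosedIn K E ∧ E ⊆ P ∧
    Fs 𝒱 (P \ E) ⊆ P ∧ Fs 𝒱 E ∩ P ⊆ E ∧ invPart 𝒱 (P \ E) = S

/-- `(P, E)` is an index pair for `S` in `N` under `𝒱`. -/
def IsIndexPairIn (𝒱 : MVF K) (N S P E : Set (Finset α)) : Prop :=
  IsClosedIn K P ∧ IsClosedIn K E ∧ E ⊆ P ∧
    Fs 𝒱 (P \ E) ⊆ N ∧ Fs 𝒱 E ∩ N ⊆ E ∧ Fs 𝒱 P ∩ N ⊆ P ∧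
    invPart 𝒱 (P \ E) = S

/-- The push forward `pf_𝒱(A, N)` of `A` in `N`. -/
def pf (𝒱 : MVF K) (A N : Set (Finset α)) : Set (Finset α) :=
  {σ | σ ∈ N ∧ ∃ (n : ℕ) (ρ : ℕ → Finset α), IsPathIn 𝒱 N n ρ ∧ ρ 0 ∈ A ∧ ρ n = σ}

/-- `𝒲` is an atomic refinement of `𝒱` (equivalently, `𝒱` is an atomic
coarsening of `𝒲`). -/
def AtomicRefinement (𝒲 𝒱 : MVF K) : Prop :=
  (∀ W ∈ 𝒲.vecs, ∃ V ∈ 𝒱.vecs, W ⊆ V) ∧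
    (𝒱.vecs \ 𝒲.vecs).ncard = 1 ∧ (𝒲.vecs \ 𝒱.vecs).ncard = 2

/-- `𝒱` and `𝒲` are atomic rearrangements of each other. -/
def AtomicRearrangement (𝒱 𝒲 : MVF K) : Prop :=
  AtomicRefinement 𝒲 𝒱 ∨ AtomicRefinement 𝒱 𝒲

/-- `⟨B⟩_𝒱`: the intersection of all convex and `𝒱`-compatible subsets of `K`
containing `B`. -/
def hull (𝒱 : MVF K) (B : Set (Finset α)) : Set (Finset α) :=
  ⋂₀ {A | A ⊆ (K : Set (Finset α)) ∧ IsConvex K A ∧ IsCompatible 𝒱 A ∧ B ⊆ A}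

lemma mem_mv_self (𝒱 : MVF K) {σ : Finset α} (h : σ ∈ K) : σ ∈ mv 𝒱 σ := by
  obtain ⟨V, hV, hσ⟩ := 𝒱.cover σ h
  exact ⟨V, ⟨hV, hσ⟩, hσ⟩

lemma mv_eq_of_mem (𝒱 : MVF K) {σ τ : Finset α} (h : τ ∈ mv 𝒱 σ) :
    mv 𝒱 τ = mv 𝒱 σ := by
  obtain ⟨V, ⟨hV, hσV⟩, hτV⟩ := h
  ext x
  constructor
  · rintro ⟨W, ⟨hW, hτW⟩, hxW⟩
    have hWV := 𝒱.disjoint W hW V hV ⟨τ, hτW, hτV⟩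
    subst hWV
    exact ⟨W, ⟨hW, hσV⟩, hxW⟩
  · rintro ⟨W, ⟨hW, hσW⟩, hxW⟩
    have hWV := 𝒱.disjoint W hW V hV ⟨σ, hσW, hσV⟩
    subst hWV
    exact ⟨W, ⟨hW, hτV⟩, hxW⟩

lemma mv_subset_of_compatible (𝒱 : MVF K) {S : Set (Finset α)}
    (hc : IsCompatible 𝒱 S) {σ : Finset α} (hσ : σ ∈ S) : mv 𝒱 σ ⊆ S := by
  obtain ⟨R, hR, rfl⟩ := hc
  rintro τ ⟨V, ⟨hV, hσV⟩, hτV⟩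
  obtain ⟨W, hWR, hσW⟩ := hσ
  have := 𝒱.disjoint V hV W (hR hWR) ⟨σ, hσV, hσW⟩
  subst this
  exact ⟨V, hWR, hτV⟩

/-- An invariant set `S ⊆ K` is isolated iff it is convex and `𝒱`-compatible. -/
theorem isolated_iff_convex_and_compatible (hK : IsComplex K) (𝒱 : MVF K)
    (S : Set (Finset α)) (hSK : S ⊆ (K : Set (Finset α)))
    (hS : IsInvariantSet 𝒱 S) :
    (∃ N, Isolates 𝒱 N S) ↔ IsConvex K S ∧ IsCompatible 𝒱 S := by
  constructor
  · rintro ⟨N, hNcl, hFN, hpathN⟩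
    -- `σ ∈ S` implies `σ ∈ N` since `σ ∈ Fv 𝒱 σ ⊆ Fs 𝒱 S ⊆ N`.
    have hSN : ∀ σ ∈ S, σ ∈ N := by
      intro σ hσ
      exact hFN (Set.mem_biUnion hσ (Or.inl ⟨hSK hσ, σ, rfl, subset_rfl⟩))
    have hFvN : ∀ σ ∈ S, ∀ τ ∈ Fv 𝒱 σ, τ ∈ N := by
      intro σ hσ τ hτ
      exact hFN (Set.mem_biUnion hσ hτ)
    constructor
    · -- convexity
      intro σ hσ τ hτ c hcK hσc hcτ
      set p : ℕ → Finset α := fun i => if i = 0 then τ else if i = 1 then c else σ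
        with hp
      have hc1 : c ∈ Fv 𝒱 τ := Or.inl ⟨hcK, τ, rfl, hcτ⟩
      have hc2 : σ ∈ Fv 𝒱 c := Or.inl ⟨hSK hσ, c, rfl, hσc⟩
      have hpath : IsPathIn 𝒱 N 2 p := by
        constructor
        · intro i hi
          interval_cases i
          · simpa [hp] using hc1
          · simpa [hp] using hc2
        · intro i hi
          interval_cases i
          · exact hSN τ hτ
          · exact hFvN τ hτ _ (by simpa [hp] using hc1)
          · exact hSN σ hσ
      have := hpathN 2 p hpath (by simpa [hp] using hτ) (by simpa [hp] using hσ)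
      simpa [hp] using this 1 (by norm_num)
    · -- compatibility
      have key : ∀ σ ∈ S, mv 𝒱 σ ⊆ S := by
        intro σ hσ τ hτ
        set p : ℕ → Finset α := fun i => if i = 1 then τ else σ with hp
        have h1 : τ ∈ Fv 𝒱 σ := Or.inr hτ
        have h2 : σ ∈ Fv 𝒱 τ := by
          refine Or.inr ?_
          rw [mv_eq_of_mem 𝒱 hτ]
          exact mem_mv_self 𝒱 (hSK hσ)
        have hpath : IsPathIn 𝒱 N 2 p := by
          constructor
          · intro i hi
            interval_cases i
            · simpa [hp] using h1
            · simpa [hp] using h2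
          · intro i hi
            interval_cases i
            · exact hSN σ hσ
            · exact hFvN σ hσ _ (by simpa [hp] using h1)
            · exact hSN σ hσ
        have := hpathN 2 p hpath (by simpa [hp] using hσ) (by simpa [hp] using hσ)
        simpa [hp] using this 1 (by norm_num)
      refine ⟨{V | V ∈ 𝒱.vecs ∧ ∃ σ ∈ S, σ ∈ V}, fun V hV => hV.1, ?_⟩
      ext τ
      constructor
      · intro hτ
        obtain ⟨V, hV, hτV⟩ := 𝒱.cover τ (hSK hτ)
        exact ⟨V, ⟨hV, τ, hτ, hτV⟩, hτV⟩
      · rintro ⟨V, ⟨hV, σ, hσ, hσV⟩, hτV⟩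
        exact key σ hσ ⟨V, ⟨hV, hσV⟩, hτV⟩
  · rintro ⟨hconv, hcomp⟩
    refine ⟨cl K S, ?_, ?_, ?_⟩
    · -- cl K S is closed
      ext σ
      constructor
      · rintro ⟨hσK, τ, hτ, hστ⟩
        exact ⟨hσK, σ, ⟨hσK, τ, hτ, hστ⟩, subset_rfl⟩
      · rintro ⟨hσK, τ, ⟨hτK, υ, hυ, hτυ⟩, hστ⟩
        exact ⟨hσK, υ, hυ, hστ.trans hτυ⟩
    · -- Fs 𝒱 S ⊆ cl K S
      rintro τ hτ
      simp only [Fs, Set.mem_iUnion] at hτ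
      obtain ⟨σ, hσ, hτF⟩ := hτ
      rcases hτF with ⟨hτK, υ, hυ, hτυ⟩ | hmv
      · simp only [Set.mem_singleton_iff] at hυ
        exact ⟨hτK, σ, hσ, hυ ▸ hτυ⟩
      · have hτS : τ ∈ S := mv_subset_of_compatible 𝒱 hcomp hσ hmv
        exact ⟨hSK hτS, τ, hτS, subset_rfl⟩
    · -- paths in cl K S with endpoint in S stay in S
      intro n p hpath hp0 hpn i hi
      have key : ∀ j ≤ n, p (n - j) ∈ S := by
        intro j
        induction j with
        | zero => intro _; simpa using hpn
        | succ j ih =>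
          intro hj
          have hjn : j ≤ n := Nat.le_of_succ_le hj
          have hprev : p (n - j) ∈ S := ih hjn
          have hstep : p (n - (j + 1) + 1) ∈ Fv 𝒱 (p (n - (j + 1))) :=
            hpath.1 _ (by omega)
          have heq : n - (j + 1) + 1 = n - j := by omega
          rw [heq] at hstep
          have hcl : p (n - (j + 1)) ∈ cl K S := hpath.2 _ (by omega)
          obtain ⟨hpK, τ, hτS, hpτ⟩ := hcl
          rcases hstep with ⟨_, υ, hυ, hsub⟩ | hmv
          · simp only [Set.mem_singleton_iff] at hυ
            subst hυ
            exact hconv _ hprev _ hτS _ hpK hsub hpτ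
          · have : p (n - (j + 1)) ∈ mv 𝒱 (p (n - j)) := by
              rw [mv_eq_of_mem 𝒱 hmv]
              exact mem_mv_self 𝒱 hpK
            exact mv_subset_of_compatible 𝒱 hcomp hprev this
      have := key (n - i) (by omega)
      rwa [Nat.sub_sub_self hi] at this

end CDS
end

section
/- Let K be a finite abstract simplicial complex and 𝒱 a multivector field on K. If A ⊆ K is convex and 𝒱-compatible, then inv_𝒱(A) is an isolated invariant set under 𝒱. -/
open scoped Classical

namespace CDS

variable {α : Type*} [DecidableEq α]

variable {K : Finset (Finset α)}

lemma mv_comm (𝒱 : MVF K) {σ τ : Finset α} (h : τ ∈ mv 𝒱 σ) : σ ∈ mv 𝒱 τ := by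
  obtain ⟨W, ⟨hW, hσ⟩, hτ⟩ := h
  exact ⟨W, ⟨hW, hτ⟩, hσ⟩

lemma compat_trans {𝒱 : MVF K} {A : Set (Finset α)} (hcomp : IsCompatible 𝒱 A)
    {σ τ : Finset α} (h : τ ∈ mv 𝒱 σ) (hσ : σ ∈ A) : τ ∈ A := by
  obtain ⟨R, hR, rfl⟩ := hcomp
  obtain ⟨V, hVR, hσV⟩ := hσ
  obtain ⟨W, ⟨hW, hσW⟩, hτW⟩ := h
  have hVW : V = W := 𝒱.disjoint V (hR hVR) W hW ⟨σ, hσV, hσW⟩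
  refine ⟨V, hVR, ?_⟩
  rw [hVW]; exact hτW

lemma shift_essential {𝒱 : MVF K} {ρ : ℤ → Finset α} (h : IsEssential 𝒱 ρ) (c : ℤ) :
    IsEssential 𝒱 (fun i => ρ (i + c)) := by
  constructor
  · intro i
    show ρ (i + 1 + c) ∈ Fv 𝒱 (ρ (i + c))
    rw [show i + 1 + c = i + c + 1 by ring]
    exact h.1 (i + c)
  · intro i hi
    obtain ⟨⟨j₁, hj₁, hne₁⟩, ⟨j₂, hj₂, hne₂⟩⟩ := h.2 (i + c) hi
    refine ⟨⟨j₁ - c, by omega, ?_⟩, ⟨j₂ - c, by omega, ?_⟩⟩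
    · show mv 𝒱 (ρ (j₁ - c + c)) ≠ mv 𝒱 (ρ (i + c))
      rwa [show j₁ - c + c = j₁ by ring]
    · show mv 𝒱 (ρ (j₂ - c + c)) ≠ mv 𝒱 (ρ (i + c))
      rwa [show j₂ - c + c = j₂ by ring]

lemma glue {𝒱 : MVF K} {A : Set (Finset α)}
    {φ ψ : ℤ → Finset α} (hessφ : IsEssential 𝒱 φ) (hessψ : IsEssential 𝒱 ψ)
    (hφA : ∀ i, φ i ∈ A) (hψA : ∀ i, ψ i ∈ A)
    {n : ℕ} {ρ : ℕ → Finset α} (hpath : ∀ i < n, ρ (i + 1) ∈ Fv 𝒱 (ρ i))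
    (hρA : ∀ i ≤ n, ρ i ∈ A)
    (hφ0 : φ 0 = ρ 0) (hψ0 : ψ 0 = ρ n) :
    ∀ i ≤ n, ρ i ∈ invPart 𝒱 A := by
  set γ : ℤ → Finset α :=
    fun i => if i ≤ 0 then φ i else if i ≤ (n : ℤ) then ρ i.toNat else ψ (i - n) with hγ
  have hmid : ∀ i : ℕ, i ≤ n → γ (i : ℤ) = ρ i := by
    intro i hi
    by_cases h0 : i = 0
    · subst h0; simp [hγ, hφ0]
    · have h1 : ¬ ((i : ℤ) ≤ 0) := by omega
      have h2 : (i : ℤ) ≤ (n : ℤ) := by exact_mod_cast hi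
      simp only [hγ, h1, if_false, if_pos h2]
      congr 1 <;> omega
  have hleft : ∀ i : ℤ, i ≤ 0 → γ i = φ i := by intro i hi; simp [hγ, hi]
  have hright : ∀ i : ℤ, (n : ℤ) ≤ i → γ i = ψ (i - n) := by
    intro i hi
    rcases lt_or_eq_of_le hi with h | h
    · have h1 : ¬ (i ≤ 0) := by omega
      have h2 : ¬ (i ≤ (n : ℤ)) := by omega
      simp [hγ, h1, h2]
    · subst h
      have hmn := hmid n le_rfl
      rw [hmn, ← hψ0]
      congr 1; omega
  have hmid' : ∀ i : ℤ, 0 ≤ i → i ≤ (n : ℤ) → γ i = ρ i.toNat := by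
    intro i h0 hn'
    have := hmid i.toNat (by omega)
    rwa [Int.toNat_of_nonneg h0] at this
  have hAγ : ∀ i, γ i ∈ A := by
    intro i
    rcases le_or_gt i 0 with h | h
    · rw [hleft i h]; exact hφA i
    · rcases le_or_gt i (n : ℤ) with h' | h'
      · rw [hmid' i (by omega) h']; exact hρA i.toNat (by omega)
      · rw [hright i (by omega)]; exact hψA _
  have hsol : IsSolution 𝒱 γ := by
    intro i
    by_cases h1 : i < 0
    · rw [hleft i (by omega), hleft (i + 1) (by omega)]; exact hessφ.1 i
    · by_cases h2 : i < (n : ℤ)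
      · rw [hmid' i (by omega) (by omega), hmid' (i + 1) (by omega) (by omega)]
        rw [show (i + 1).toNat = i.toNat + 1 by omega]
        exact hpath i.toNat (by omega)
      · rw [hright i (by omega), hright (i + 1) (by omega)]
        rw [show i + 1 - (n : ℤ) = (i - n) + 1 by ring]
        exact hessψ.1 (i - n)
  have hessγ : IsEssential 𝒱 γ := by
    refine ⟨hsol, fun i hcrit => ⟨?_, ?_⟩⟩
    · by_contra h
      push_neg at h
      set k : ℤ := min i 0 - 1 with hk
      have hki : k < i := by omega
      have hγk : γ k = φ k := hleft k (by omega)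
      have hmvk : mv 𝒱 (γ k) = mv 𝒱 (γ i) := h k hki
      have hcrit' : ¬ IsCritical K (mv 𝒱 (φ k)) := by rw [← hγk, hmvk]; exact hcrit
      obtain ⟨⟨j, hj, hne⟩, -⟩ := hessφ.2 k hcrit'
      apply hne
      rw [← hleft j (by omega), ← hγk, h j (by omega), hmvk]
    · by_contra h
      push_neg at h
      set k : ℤ := max i (n : ℤ) + 1 with hk
      have hki : i < k := by omega
      have hγk : γ k = ψ (k - n) := hright k (by omega)
      have hcrit' : ¬ IsCritical K (mv 𝒱 (ψ (k - n))) := by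
        rw [← hγk, h k hki]; exact hcrit
      obtain ⟨-, ⟨j, hj, hne⟩⟩ := hessψ.2 (k - n) hcrit'
      have hγj : γ (j + n) = ψ (j + n - n) := hright (j + n) (by omega)
      rw [show j + (n : ℤ) - n = j by ring] at hγj
      apply hne
      rw [← hγj, ← hγk, h (j + n) (by omega), h k hki]
  intro i hi
  exact ⟨γ, hessγ, hAγ, (i : ℤ), hmid i hi⟩


/-- If `A` is convex and `𝒱`-compatible, then `inv_𝒱(A)` is an isolated
invariant set. -/
theorem invPart_isolatedInvariantSet (hK : IsComplex K) (𝒱 : MVF K)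
    (A : Set (Finset α)) (hAK : A ⊆ (K : Set (Finset α)))
    (hconv : IsConvex K A) (hcomp : IsCompatible 𝒱 A) :
    IsIsolatedInvariantSet 𝒱 (invPart 𝒱 A) := by
  set S := invPart 𝒱 A with hSdef
  have hSA : S ⊆ A := by
    rintro σ ⟨ρ, -, hρ, i, rfl⟩
    exact hρ i
  constructor
  · -- invariance
    ext σ
    constructor
    · rintro ⟨ρ, -, hρ, i, rfl⟩
      exact hρ i
    · rintro ⟨ρ, hess, hρ, i, hi⟩
      exact ⟨ρ, hess, fun j => ⟨ρ, hess, hρ, j, rfl⟩, i, hi⟩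
  · refine ⟨cl K A, ?_, ?_, ?_⟩
    · -- cl K A is closed
      ext τ
      constructor
      · rintro ⟨hτK, ω, hω, hsub⟩
        exact ⟨hτK, τ, ⟨hτK, ω, hω, hsub⟩, Finset.Subset.refl _⟩
      · rintro ⟨hτK, ω, ⟨hωK, ω', hω', hsub'⟩, hsub⟩
        exact ⟨hτK, ω', hω', hsub.trans hsub'⟩
    · -- Fs 𝒱 S ⊆ cl K A
      intro τ hτ
      simp only [Fs, Set.mem_iUnion] at hτ
      obtain ⟨σ, hσS, hτF⟩ := hτ
      have hσA : σ ∈ A := hSA hσS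
      rcases hτF with h | h
      · obtain ⟨hτK, σ', hσ', hsub⟩ := h
        rw [Set.mem_singleton_iff] at hσ'
        exact ⟨hτK, σ, hσA, hσ' ▸ hsub⟩
      · have hτA : τ ∈ A := compat_trans hcomp h hσA
        exact ⟨Finset.mem_coe.mp (hAK hτA), τ, hτA, Finset.Subset.refl _⟩
    · -- isolation
      intro n ρ hpath h0 hn
      have hstep : ∀ σ τ, σ ∈ cl K A → σ ∉ A → τ ∈ Fv 𝒱 σ → τ ∉ A := by
        intro σ τ hσcl hσA hτF hτA
        obtain ⟨hσK, ω, hωA, hσω⟩ := hσcl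
        rcases hτF with h | h
        · obtain ⟨hτK, σ', hσ', hτσ'⟩ := h
          rw [Set.mem_singleton_iff] at hσ'
          exact hσA (hconv τ hτA ω hωA σ hσK (hσ' ▸ hτσ') hσω)
        · exact hσA (compat_trans hcomp (mv_comm 𝒱 h) hτA)
      have hnA : ρ n ∈ A := hSA hn
      have hnotA : ∀ i ≤ n, ρ i ∉ A → ∀ j, i ≤ j → j ≤ n → ρ j ∉ A := by
        intro i hi hiA j
        induction j with
        | zero =>
          intro hij hjn
          have : i = 0 := by omega
          exact this ▸ hiA
        | succ m ih =>
          intro hij hjn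
          by_cases hc : i ≤ m
          · have hm : ρ m ∉ A := ih hc (by omega)
            exact hstep (ρ m) (ρ (m + 1)) (hpath.2 m (by omega)) hm (hpath.1 m (by omega))
          · have : i = m + 1 := by omega
            exact this ▸ hiA
      have hallA : ∀ i ≤ n, ρ i ∈ A := by
        intro i hi
        by_contra hiA
        exact hnotA i hi hiA n hi le_rfl hnA
      obtain ⟨φ₀, hessφ, hφA, i₀, hi₀⟩ := h0
      obtain ⟨ψ₀, hessψ, hψA, j₀, hj₀⟩ := hn
      have hessφ' := shift_essential hessφ i₀
      have hessψ' := shift_essential hessψ j₀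
      refine glue hessφ' hessψ' (fun i => hφA _) (fun i => hψA _) hpath.1 hallA ?_ ?_
      · show φ₀ (0 + i₀) = ρ 0
        rw [zero_add]; exact hi₀
      · show ψ₀ (0 + j₀) = ρ n
        rw [zero_add]; exact hj₀

end CDS
end

section
/- Let K be a finite abstract simplicial complex. For every pair of multivector fields 𝒱 and 𝒱' on K there exists a finite sequence of multivector fields 𝒱 = 𝒱₁, 𝒱₂, …, 𝒱ₙ = 𝒱' on K such that for every i > 1, 𝒱ᵢ is an atomic rearrangement of 𝒱_{i−1}. -/
open scoped Classical

namespace CDS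

variable {α : Type*} [DecidableEq α]

variable {K : Finset (Finset α)}

/-! ### Auxiliary material for the proof -/

/-- Pick an element from a nonempty set of simplices. -/
noncomputable def pick (V : Set (Finset α)) : Finset α :=
  if h : V.Nonempty then h.choose else ∅

lemma pick_mem {V : Set (Finset α)} (h : V.Nonempty) : pick V ∈ V := by
  rw [pick, dif_pos h]; exact h.choose_spec

lemma MVF.vecs_finite (𝒱 : MVF K) : 𝒱.vecs.Finite :=
  Set.Finite.subset (K.finite_toSet.finite_subsets) fun V hV => 𝒱.sub V hV

lemma MVF.vec_finite (𝒱 : MVF K) {V : Set (Finset α)} (hV : V ∈ 𝒱.vecs) : V.Finite :=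
  Set.Finite.subset K.finite_toSet (𝒱.sub V hV)

lemma MVF.ncard_vecs_le (𝒱 : MVF K) : 𝒱.vecs.ncard ≤ K.card := by
  have h := Set.ncard_le_ncard_of_injOn pick
    (fun V hV => 𝒱.sub V hV (pick_mem (𝒱.nonempty V hV)))
    (fun V hV W hW hp => 𝒱.disjoint V hV W hW
      ⟨pick V, pick_mem (𝒱.nonempty V hV), hp ▸ pick_mem (𝒱.nonempty W hW)⟩)
    K.finite_toSet
  simpa using h

lemma MVF.eq_of_vecs {𝒱 𝒲 : MVF K} (h : 𝒱.vecs = 𝒲.vecs) : 𝒱 = 𝒲 := by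
  cases 𝒱; cases 𝒲; simp_all

/-- The singleton multivector field on `K`. -/
def singMVF (K : Finset (Finset α)) : MVF K where
  vecs := {V | ∃ σ ∈ K, V = {σ}}
  sub := by rintro V ⟨σ, hσ, rfl⟩ x hx; simp_all
  convex := by
    rintro V ⟨σ, hσ, rfl⟩ a ha b hb ρ hρ hab hbb
    simp only [Set.mem_singleton_iff] at *
    subst ha; subst hb; exact subset_antisymm hbb hab
  nonempty := by rintro V ⟨σ, hσ, rfl⟩; exact ⟨σ, rfl⟩
  cover := fun σ hσ => ⟨{σ}, ⟨σ, hσ, rfl⟩, rfl⟩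
  disjoint := by
    rintro V ⟨σ, hσ, rfl⟩ W ⟨τ, hτ, rfl⟩ ⟨x, hx1, hx2⟩
    simp only [Set.mem_singleton_iff] at hx1 hx2
    rw [hx1] at hx2; rw [hx2]

/-- Splitting a multivector `V` of `𝒱` along a maximal element `τ`. -/
noncomputable def splitMVF (𝒱 : MVF K) (V : Set (Finset α)) (hV : V ∈ 𝒱.vecs)
    (τ : Finset α) (hτ : τ ∈ V) (hmax : ∀ ρ ∈ V, τ ⊆ ρ → ρ = τ)
    (hnt : (V \ {τ}).Nonempty) : MVF K where
  vecs := (𝒱.vecs \ {V}) ∪ {{τ}, V \ {τ}}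
  sub := by
    rintro W (⟨hW, -⟩ | (rfl | rfl))
    · exact 𝒱.sub W hW
    · rintro x hx; simp only [Set.mem_singleton_iff] at hx
      exact hx ▸ 𝒱.sub V hV hτ
    · exact fun x hx => 𝒱.sub V hV hx.1
  convex := by
    rintro W (⟨hW, -⟩ | (rfl | rfl))
    · exact 𝒱.convex W hW
    · rintro a ha b hb ρ hρ h1 h2
      simp only [Set.mem_singleton_iff] at *
      subst ha; subst hb; exact subset_antisymm h2 h1
    · rintro a ⟨ha, ha'⟩ b ⟨hb, hb'⟩ ρ hρ h1 h2
      refine ⟨𝒱.convex V hV a ha b hb ρ hρ h1 h2, ?_⟩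
      intro hρτ
      simp only [Set.mem_singleton_iff] at hρτ hb'
      subst hρτ
      exact hb' (hmax b hb h2)
  nonempty := by
    rintro W (⟨hW, -⟩ | (rfl | rfl))
    · exact 𝒱.nonempty W hW
    · exact ⟨τ, rfl⟩
    · exact hnt
  cover := by
    intro σ hσ
    obtain ⟨W, hW, hσW⟩ := 𝒱.cover σ hσ
    by_cases hWV : W = V
    · subst hWV
      by_cases hστ : σ = τ
      · exact ⟨{τ}, Or.inr (Or.inl rfl), by simp [hστ]⟩
      · exact ⟨W \ {τ}, Or.inr (Or.inr rfl), hσW, hστ⟩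
    · exact ⟨W, Or.inl ⟨hW, hWV⟩, hσW⟩
  disjoint := by
    have key : ∀ W ∈ 𝒱.vecs, W ≠ V → ∀ x, x ∈ W → x ∈ V → False := by
      intro W hW hWV x hxW hxV
      exact hWV (𝒱.disjoint W hW V hV ⟨x, hxW, hxV⟩)
    rintro W (⟨hW, hWV⟩ | (rfl | rfl)) W' (⟨hW', hWV'⟩ | (rfl | rfl)) ⟨x, hx1, hx2⟩
    · exact 𝒱.disjoint W hW W' hW' ⟨x, hx1, hx2⟩
    · simp only [Set.mem_singleton_iff] at hx2
      exact absurd (key W hW hWV x hx1 (hx2 ▸ hτ)) not_false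
    · exact absurd (key W hW hWV x hx1 hx2.1) not_false
    · simp only [Set.mem_singleton_iff] at hx1
      exact absurd (key W' hW' hWV' x hx2 (hx1 ▸ hτ)) not_false
    · rfl
    · simp only [Set.mem_singleton_iff] at hx1
      exact absurd (hx1 ▸ hx2.2 : τ ∉ ({τ} : Set (Finset α))) (by simp)
    · exact absurd (key W' hW' hWV' x hx2 hx1.1) not_false
    · simp only [Set.mem_singleton_iff] at hx2
      exact absurd (hx2 ▸ hx1.2 : τ ∉ ({τ} : Set (Finset α))) (by simp)
    · rfl

lemma splitMVF_facts (𝒱 : MVF K) (V : Set (Finset α)) (hV : V ∈ 𝒱.vecs)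
    (τ : Finset α) (hτ : τ ∈ V) (hmax : ∀ ρ ∈ V, τ ⊆ ρ → ρ = τ)
    (hnt : (V \ {τ}).Nonempty) :
    AtomicRefinement (splitMVF 𝒱 V hV τ hτ hmax hnt) 𝒱 ∧
      (splitMVF 𝒱 V hV τ hτ hmax hnt).vecs.ncard = 𝒱.vecs.ncard + 1 := by
  set 𝒲 := splitMVF 𝒱 V hV τ hτ hmax hnt with h𝒲
  obtain ⟨σ, hσV, hστ⟩ := hnt
  simp only [Set.mem_singleton_iff] at hστ
  have hVne1 : V ≠ {τ} := by
    intro h; rw [h] at hσV; exact hστ hσV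
  have hVne2 : V ≠ V \ {τ} := by
    intro h; rw [h] at hτ; exact hτ.2 rfl
  have hpairne : ({τ} : Set (Finset α)) ≠ V \ {τ} := by
    intro h
    have : τ ∈ V \ {τ} := h ▸ rfl
    exact this.2 rfl
  have hτnotin : ({τ} : Set (Finset α)) ∉ 𝒱.vecs := by
    intro h
    exact hVne1 (𝒱.disjoint V hV {τ} h ⟨τ, hτ, rfl⟩)
  have hdnotin : (V \ {τ} : Set (Finset α)) ∉ 𝒱.vecs := by
    intro h
    exact hVne2 (𝒱.disjoint V hV (V \ {τ}) h ⟨σ, hσV, hσV, hστ⟩)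
  have hvecs : 𝒲.vecs = (𝒱.vecs \ {V}) ∪ {{τ}, V \ {τ}} := rfl
  have hdiff1 : 𝒱.vecs \ 𝒲.vecs = {V} := by
    ext W
    simp only [hvecs, Set.mem_diff, Set.mem_union, Set.mem_singleton_iff,
      Set.mem_insert_iff, not_or]
    constructor
    · rintro ⟨hW, h1, -⟩
      by_contra hne
      exact h1 ⟨hW, hne⟩
    · rintro rfl
      exact ⟨hV, fun h => h.2 rfl, hVne1, hVne2⟩
  have hdiff2 : 𝒲.vecs \ 𝒱.vecs = {{τ}, V \ {τ}} := by
    ext W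
    simp only [hvecs, Set.mem_diff, Set.mem_union, Set.mem_singleton_iff,
      Set.mem_insert_iff]
    constructor
    · rintro ⟨⟨hW, -⟩ | h, hn⟩
      · exact absurd hW hn
      · exact h
    · rintro (rfl | rfl)
      · exact ⟨Or.inr (Or.inl rfl), hτnotin⟩
      · exact ⟨Or.inr (Or.inr rfl), hdnotin⟩
  have hfin : 𝒱.vecs.Finite := 𝒱.vecs_finite
  have hdisj : Disjoint (𝒱.vecs \ {V}) ({{τ}, V \ {τ}} : Set (Set (Finset α))) := by
    rw [Set.disjoint_right]
    rintro W (rfl | rfl) ⟨hW, -⟩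
    · exact hτnotin hW
    · exact hdnotin hW
  have hcard : 𝒲.vecs.ncard = 𝒱.vecs.ncard + 1 := by
    rw [hvecs, Set.ncard_union_eq hdisj (hfin.diff) (Set.toFinite _),
      Set.ncard_diff_singleton_of_mem hV, Set.ncard_pair hpairne]
    have : 0 < 𝒱.vecs.ncard := (Set.ncard_pos hfin).2 ⟨V, hV⟩
    omega
  refine ⟨⟨?_, ?_, ?_⟩, hcard⟩
  · rintro W (⟨hW, -⟩ | (rfl | rfl))
    · exact ⟨W, hW, subset_rfl⟩
    · exact ⟨V, hV, by simpa using hτ⟩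
    · exact ⟨V, hV, Set.diff_subset⟩
  · rw [hdiff1]; exact Set.ncard_singleton V
  · rw [hdiff2]; exact Set.ncard_pair hpairne

lemma AR_symm : Symmetric (AtomicRearrangement (K := K)) := fun _ _ h => Or.symm h

/-- Every multivector field is connected to the singleton field. -/
lemma to_sing (𝒱 : MVF K) :
    Relation.ReflTransGen (AtomicRearrangement (K := K)) 𝒱 (singMVF K) := by
  suffices H : ∀ (m : ℕ) (𝒱 : MVF K), K.card - 𝒱.vecs.ncard ≤ m →
      Relation.ReflTransGen (AtomicRearrangement (K := K)) 𝒱 (singMVF K) from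
    H (K.card - 𝒱.vecs.ncard) 𝒱 le_rfl
  intro m
  induction m with
  | zero =>
    intro 𝒱 hm
    -- show all multivectors are singletons, or derive a contradiction
    by_cases hall : ∀ V ∈ 𝒱.vecs, ∀ a ∈ V, ∀ b ∈ V, a = b
    · have : 𝒱 = singMVF K := by
        apply MVF.eq_of_vecs
        ext V
        constructor
        · intro hV
          obtain ⟨a, ha⟩ := 𝒱.nonempty V hV
          refine ⟨a, 𝒱.sub V hV ha, ?_⟩
          ext b
          simp only [Set.mem_singleton_iff]
          exact ⟨fun hb => hall V hV b hb a ha, fun hb => hb ▸ ha⟩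
        · rintro ⟨a, haK, rfl⟩
          obtain ⟨W, hW, haW⟩ := 𝒱.cover a haK
          have : W = {a} := by
            ext b
            simp only [Set.mem_singleton_iff]
            exact ⟨fun hb => hall W hW b hb a haW, fun hb => hb ▸ haW⟩
          exact this ▸ hW
      exact this ▸ Relation.ReflTransGen.refl
    · exfalso
      push_neg at hall
      obtain ⟨V, hV, a, ha, b, hb, hab⟩ := hall
      obtain ⟨τ, hτ, hmax'⟩ := Set.Finite.exists_maximalFor id V (𝒱.vec_finite hV)
        ⟨a, ha⟩
      have hmax : ∀ ρ ∈ V, τ ⊆ ρ → ρ = τ := fun ρ hρ hsub =>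
        le_antisymm (hmax' hρ hsub) hsub
      have hnt : (V \ {τ}).Nonempty := by
        by_cases hat : a = τ
        · exact ⟨b, hb, by simp [← hat, Ne.symm hab]⟩
        · exact ⟨a, ha, by simp [hat]⟩
      obtain ⟨href, hcard⟩ := splitMVF_facts 𝒱 V hV τ hτ hmax hnt
      have h1 : (splitMVF 𝒱 V hV τ hτ hmax hnt).vecs.ncard ≤ K.card :=
        MVF.ncard_vecs_le _
      omega
  | succ m ih =>
    intro 𝒱 hm
    by_cases hall : ∀ V ∈ 𝒱.vecs, ∀ a ∈ V, ∀ b ∈ V, a = b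
    · have : 𝒱 = singMVF K := by
        apply MVF.eq_of_vecs
        ext V
        constructor
        · intro hV
          obtain ⟨a, ha⟩ := 𝒱.nonempty V hV
          refine ⟨a, 𝒱.sub V hV ha, ?_⟩
          ext b
          simp only [Set.mem_singleton_iff]
          exact ⟨fun hb => hall V hV b hb a ha, fun hb => hb ▸ ha⟩
        · rintro ⟨a, haK, rfl⟩
          obtain ⟨W, hW, haW⟩ := 𝒱.cover a haK
          have : W = {a} := by
            ext b
            simp only [Set.mem_singleton_iff]
            exact ⟨fun hb => hall W hW b hb a haW, fun hb => hb ▸ haW⟩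
          exact this ▸ hW
      exact this ▸ Relation.ReflTransGen.refl
    · push_neg at hall
      obtain ⟨V, hV, a, ha, b, hb, hab⟩ := hall
      obtain ⟨τ, hτ, hmax'⟩ := Set.Finite.exists_maximalFor id V (𝒱.vec_finite hV)
        ⟨a, ha⟩
      have hmax : ∀ ρ ∈ V, τ ⊆ ρ → ρ = τ := fun ρ hρ hsub =>
        le_antisymm (hmax' hρ hsub) hsub
      have hnt : (V \ {τ}).Nonempty := by
        by_cases hat : a = τ
        · exact ⟨b, hb, by simp [← hat, Ne.symm hab]⟩
        · exact ⟨a, ha, by simp [hat]⟩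
      obtain ⟨href, hcard⟩ := splitMVF_facts 𝒱 V hV τ hτ hmax hnt
      have h1 : (splitMVF 𝒱 V hV τ hτ hmax hnt).vecs.ncard ≤ K.card :=
        MVF.ncard_vecs_le _
      have hstep : AtomicRearrangement 𝒱 (splitMVF 𝒱 V hV τ hτ hmax hnt) :=
        Or.inl href
      exact Relation.ReflTransGen.head hstep (ih _ (by omega))

lemma seq_of_rtg {a b : MVF K}
    (h : Relation.ReflTransGen (AtomicRearrangement (K := K)) a b) :
    ∃ (n : ℕ) (seq : ℕ → MVF K), seq 0 = a ∧ seq n = b ∧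
      ∀ i < n, AtomicRearrangement (seq i) (seq (i + 1)) := by
  induction h with
  | refl => exact ⟨0, fun _ => a, rfl, rfl, fun i hi => absurd hi (Nat.not_lt_zero i)⟩
  | @tail b c hab hbc ih =>
    obtain ⟨n, seq, h0, hn, hstep⟩ := ih
    refine ⟨n + 1, fun i => if i ≤ n then seq i else c, by simp [h0], by simp, ?_⟩
    intro i hi
    rcases Nat.lt_or_ge i n with h | h
    · simpa [Nat.le_of_lt h, Nat.succ_le_of_lt h] using hstep i h
    · have : i = n := by omega
      subst this
      simpa [hn] using hbc

/-- Any two multivector fields on `K` are connected by a finite sequence of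
atomic rearrangements. -/
theorem exists_atomic_rearrangement_sequence (hK : IsComplex K)
    (𝒱 𝒱' : MVF K) :
    ∃ (n : ℕ) (seq : ℕ → MVF K), seq 0 = 𝒱 ∧ seq n = 𝒱' ∧
      ∀ i < n, AtomicRearrangement (seq (i + 1)) (seq i) := by
  have h1 := to_sing 𝒱
  have h2 := to_sing 𝒱'
  have h2' : Relation.ReflTransGen (AtomicRearrangement (K := K)) (singMVF K) 𝒱' :=
    (@Relation.ReflTransGen.stdSymm _ _ ⟨AR_symm⟩).symm _ _ h2
  obtain ⟨n, seq, h0, hn, hstep⟩ := seq_of_rtg (h1.trans h2')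
  exact ⟨n, seq, h0, hn, fun i hi => AR_symm (hstep i hi)⟩

end CDS
end

section
/- Let K be a finite abstract simplicial complex and 𝒱 a multivector field on K. If S is an isolated invariant set under 𝒱, then the pair (cl(S), mo(S)) is an index pair for S under 𝒱. -/
open scoped Classical

namespace CDS

variable {α : Type*} [DecidableEq α]

variable {K : Finset (Finset α)}

lemma Fv_subset_K (𝒱 : MVF K) (σ : Finset α) :
    Fv 𝒱 σ ⊆ (K : Set (Finset α)) := by
  rintro τ (h | h)
  · exact h.1
  · obtain ⟨V, ⟨hV, _⟩, hτ⟩ := h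
    exact 𝒱.sub V hV hτ

/-- For an isolated invariant set `S`, the pair `(cl S, mo S)` is an index
pair for `S`. -/
theorem closure_mouth_indexPair (hK : IsComplex K) (𝒱 : MVF K)
    (S : Set (Finset α)) (hS : IsIsolatedInvariantSet 𝒱 S) :
    IsIndexPair 𝒱 S (cl K S) (mo K S) := by
  obtain ⟨hInv, N, _, hFsN, hIso⟩ := hS
  -- S ⊆ K
  have hSK : S ⊆ (K : Set (Finset α)) := by
    intro σ hσ
    rw [← hInv] at hσ
    obtain ⟨ρ, ⟨hsol, _⟩, _, i, hi⟩ := hσ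
    have h := hsol (i - 1)
    rw [sub_add_cancel, hi] at h
    exact Fv_subset_K 𝒱 _ h
  have hScl : S ⊆ cl K S := fun σ hσ => ⟨hSK hσ, σ, hσ, subset_rfl⟩
  have hSN : S ⊆ N := by
    intro σ hσ
    exact hFsN (Set.mem_biUnion hσ (Or.inl ⟨hSK hσ, σ, rfl, subset_rfl⟩))
  -- paths of length 2 starting and ending in S stay in S
  have path2 : ∀ υ τ σ, υ ∈ S → σ ∈ S → τ ∈ N → τ ∈ Fv 𝒱 υ → σ ∈ Fv 𝒱 τ →
      τ ∈ S := by
    intro υ τ σ hυ hσ hτN h1 h2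
    set ρ : ℕ → Finset α := fun i => if i = 0 then υ else if i = 1 then τ else σ
      with hρ
    have hp : IsPathIn 𝒱 N 2 ρ := by
      constructor
      · intro i hi
        interval_cases i <;> simpa [ρ]
      · intro i hi
        interval_cases i <;> simp [ρ, hSN hυ, hSN hσ, hτN]
    have := hIso 2 ρ hp (by simp [ρ]; exact hυ) (by simp [ρ]; exact hσ) 1
      (by norm_num)
    simpa [ρ] using this
  -- S is convex
  have hSconvex : IsConvex K S := by
    intro σ hσ τ hτ ρ hρ hσρ hρτ
    have h1 : ρ ∈ Fv 𝒱 τ := Or.inl ⟨hρ, τ, rfl, hρτ⟩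
    have h2 : σ ∈ Fv 𝒱 ρ := Or.inl ⟨hSK hσ, ρ, rfl, hσρ⟩
    exact path2 τ ρ σ hτ hσ (hFsN (Set.mem_biUnion hτ h1)) h1 h2
  -- S is 𝒱-compatible
  have hScompat : ∀ σ ∈ S, mv 𝒱 σ ⊆ S := by
    intro σ hσ τ hτ
    obtain ⟨V, ⟨hV, hσV⟩, hτV⟩ := hτ
    have hτFv : τ ∈ Fv 𝒱 σ := Or.inr ⟨V, ⟨hV, hσV⟩, hτV⟩
    have hσFv : σ ∈ Fv 𝒱 τ := Or.inr ⟨V, ⟨hV, hτV⟩, hσV⟩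
    exact path2 σ τ σ hσ hσ (hFsN (Set.mem_biUnion hσ hτFv)) hτFv hσFv
  -- P \ E = S
  have hPE : cl K S \ mo K S = S := by
    ext σ
    simp only [mo, Set.mem_diff]
    constructor
    · rintro ⟨h1, h2⟩
      by_contra hσ
      exact h2 ⟨h1, hσ⟩
    · intro hσ
      exact ⟨hScl hσ, fun h => h.2 hσ⟩
  -- Fs S ⊆ cl S
  have hFsS : Fs 𝒱 S ⊆ cl K S := by
    intro τ hτ
    simp only [Fs, Set.mem_iUnion] at hτ
    obtain ⟨σ, hσ, h⟩ := hτ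
    rcases h with ⟨hτK, υ, hυ, hsub⟩ | h
    · exact ⟨hτK, σ, hσ, by rwa [Set.mem_singleton_iff.mp hυ] at hsub⟩
    · exact hScl (hScompat σ hσ h)
  refine ⟨?_, ?_, fun σ h => h.1, ?_, ?_, ?_⟩
  · -- cl S is closed
    apply Set.eq_of_subset_of_subset
    · intro σ hσ; exact ⟨hσ.1, σ, hσ, subset_rfl⟩
    · intro σ hσ
      obtain ⟨hσK, τ, ⟨hτK, υ, hυ, hτυ⟩, hστ⟩ := hσ
      exact ⟨hσK, υ, hυ, hστ.trans hτυ⟩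
  · -- mo S is closed
    apply Set.eq_of_subset_of_subset
    · intro σ hσ; exact ⟨(hσ.1).1, σ, hσ, subset_rfl⟩
    · intro σ hσ
      obtain ⟨hσK, τ, ⟨⟨hτK, υ, hυ, hτυ⟩, hτS⟩, hστ⟩ := hσ
      refine ⟨⟨hσK, υ, hυ, hστ.trans hτυ⟩, fun hσS => ?_⟩
      exact hτS (hSconvex σ hσS υ hυ τ hτK hστ hτυ)
  · -- Fs (P \ E) ⊆ P
    rw [hPE]; exact hFsS
  · -- Fs E ∩ P ⊆ E
    rintro τ ⟨hτF, hτP⟩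
    simp only [Fs, Set.mem_iUnion] at hτF
    obtain ⟨σ, ⟨hσcl, hσS⟩, hF⟩ := hτF
    refine ⟨hτP, fun hτS => ?_⟩
    rcases hF with ⟨hτK, υ, hυ, hsub⟩ | h
    · obtain ⟨hσK, w, hwS, hσw⟩ := hσcl
      rw [Set.mem_singleton_iff.mp hυ] at hsub
      exact hσS (hSconvex τ hτS w hwS σ hσK hsub hσw)
    · obtain ⟨V, ⟨hV, hσV⟩, hτV⟩ := h
      exact hσS (hScompat τ hτS ⟨V, ⟨hV, hτV⟩, hσV⟩)
  · -- invariant part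
    rw [hPE]; exact hInv

end CDS
end

section
/- Let K be a finite abstract simplicial complex, 𝒱 a multivector field on K, and S an isolated invariant set under 𝒱. If (P, E) is an index pair for S under 𝒱, then P \ E is convex and 𝒱-compatible. -/
open scoped Classical

namespace CDS

variable {α : Type*} [DecidableEq α]

variable {K : Finset (Finset α)}

/-- If `(P, E)` is an index pair for `S`, then `P \ E` is convex and
`𝒱`-compatible. -/
theorem indexPair_diff_convex_compatible (hK : IsComplex K) (𝒱 : MVF K)
    (S P E : Set (Finset α)) (hS : IsIsolatedInvariantSet 𝒱 S)
    (hPE : IsIndexPair 𝒱 S P E) :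
    IsConvex K (P \ E) ∧ IsCompatible 𝒱 (P \ E) := by
  obtain ⟨hPcl, hEcl, hEP, hF, hFE, _⟩ := hPE
  have hPK : P ⊆ (K : Set (Finset α)) := by
    intro σ hσ
    rw [hPcl] at hσ
    exact hσ.1
  -- key: if σ ∈ P \ E and τ in the same multivector, then τ ∈ P \ E
  have key : ∀ σ ∈ P \ E, ∀ V ∈ 𝒱.vecs, σ ∈ V → V ⊆ P \ E := by
    intro σ hσ V hV hσV τ hτ
    have hτP : τ ∈ P := by
      apply hF
      refine Set.mem_biUnion hσ ?_
      exact Or.inr ⟨V, ⟨hV, hσV⟩, hτ⟩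
    refine ⟨hτP, fun hτE => hσ.2 ?_⟩
    apply hFE
    refine ⟨Set.mem_biUnion hτE (Or.inr ⟨V, ⟨hV, hτ⟩, hσV⟩), hσ.1⟩
  constructor
  · intro σ hσ τ hτ ρ hρK hσρ hρτ
    have hρP : ρ ∈ P := by
      rw [hPcl]; exact ⟨hρK, τ, hτ.1, hρτ⟩
    refine ⟨hρP, fun hρE => hσ.2 ?_⟩
    rw [hEcl]
    have hσK : σ ∈ K := hPK hσ.1
    exact ⟨hσK, ρ, hρE, hσρ⟩
  · refine ⟨{V | V ∈ 𝒱.vecs ∧ V ⊆ P \ E}, fun V hV => hV.1, ?_⟩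
    apply subset_antisymm
    · intro σ hσ
      obtain ⟨V, hV, hσV⟩ := 𝒱.cover σ (hPK hσ.1)
      exact ⟨V, ⟨hV, key σ hσ V hV hσV⟩, hσV⟩
    · intro σ hσ
      obtain ⟨V, hV, hσV⟩ := hσ
      exact hV.2 hσV

end CDS
end

section
/- Let K be a finite abstract simplicial complex and 𝒱 a multivector field on K. If A ⊆ K is convex and 𝒱-compatible, then (cl(A), mo(A)) is an index pair for inv_𝒱(A) under 𝒱. -/
open scoped Classical

namespace CDS

variable {α : Type*} [DecidableEq α]

variable {K : Finset (Finset α)}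

lemma subset_cl_of_subset {A : Set (Finset α)} (hAK : A ⊆ (K : Set (Finset α))) :
    A ⊆ cl K A := fun σ hσ => ⟨hAK hσ, σ, hσ, subset_rfl⟩

lemma cl_diff_mo {A : Set (Finset α)} (hAK : A ⊆ (K : Set (Finset α))) :
    cl K A \ mo K A = A := by
  ext σ
  constructor
  · rintro ⟨h1, h2⟩
    by_contra h
    exact h2 ⟨h1, h⟩
  · intro h
    exact ⟨subset_cl_of_subset hAK h, fun h2 => h2.2 h⟩

lemma mem_A_of_le {A : Set (Finset α)} (hconv : IsConvex K A)
    {σ τ : Finset α} (hσ : σ ∈ K) (hτ : τ ∈ cl K A) (hst : σ ⊆ τ) (hσA : σ ∈ A) :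
    τ ∈ A := by
  obtain ⟨hτK, ρ, hρA, hτρ⟩ := hτ
  exact hconv σ hσA ρ hρA τ hτK hst hτρ

lemma mv_subset_of_compat {𝒱 : MVF K} {A : Set (Finset α)}
    (hcomp : IsCompatible 𝒱 A) {σ : Finset α} (hσA : σ ∈ A) :
    mv 𝒱 σ ⊆ A := by
  obtain ⟨R, hR, rfl⟩ := hcomp
  obtain ⟨W, hWR, hσW⟩ := hσA
  rintro τ ⟨V, ⟨hV, hσV⟩, hτV⟩
  have : V = W := 𝒱.disjoint V hV W (hR hWR) ⟨σ, hσV, hσW⟩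
  exact ⟨W, hWR, this ▸ hτV⟩

lemma mv_disjoint_of_compat {𝒱 : MVF K} {A : Set (Finset α)}
    (hcomp : IsCompatible 𝒱 A) {σ : Finset α} (hσA : σ ∉ A) :
    mv 𝒱 σ ∩ A = ∅ := by
  obtain ⟨R, hR, rfl⟩ := hcomp
  ext τ
  simp only [Set.mem_inter_iff, Set.mem_empty_iff_false, iff_false, not_and]
  rintro ⟨V, ⟨hV, hσV⟩, hτV⟩ ⟨W, hWR, hτW⟩
  have : V = W := 𝒱.disjoint V hV W (hR hWR) ⟨τ, hτV, hτW⟩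
  exact hσA ⟨W, hWR, this ▸ hσV⟩

/-- If `A` is convex and `𝒱`-compatible, then `(cl A, mo A)` is an index pair
for `inv_𝒱(A)`. -/
theorem closure_mouth_indexPair_of_convex_compatible (hK : IsComplex K)
    (𝒱 : MVF K) (A : Set (Finset α)) (hAK : A ⊆ (K : Set (Finset α)))
    (hconv : IsConvex K A) (hcomp : IsCompatible 𝒱 A) :
    IsIndexPair 𝒱 (invPart 𝒱 A) (cl K A) (mo K A) := by
  have hclcl : IsClosedIn K (cl K A) := by
    apply Set.Subset.antisymm
    · exact subset_cl_of_subset (fun σ hσ => hσ.1)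
    · rintro σ ⟨hσK, τ, ⟨hτK, ρ, hρA, hτρ⟩, hστ⟩
      exact ⟨hσK, ρ, hρA, hστ.trans hτρ⟩
  have hmo_closed : IsClosedIn K (mo K A) := by
    apply Set.Subset.antisymm
    · exact subset_cl_of_subset (fun σ hσ => hσ.1.1)
    · rintro σ ⟨hσK, τ, hτmo, hστ⟩
      constructor
      · exact hclcl.symm ▸ ⟨hσK, τ, hτmo.1, hστ⟩
      · intro hσA
        exact hτmo.2 (mem_A_of_le hconv hσK hτmo.1 hστ hσA)
  refine ⟨hclcl, hmo_closed, fun σ hσ => hσ.1, ?_, ?_, ?_⟩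
  · -- Fs 𝒱 (cl A \ mo A) ⊆ cl A
    rw [cl_diff_mo hAK]
    rintro τ hτ
    simp only [Fs, Set.mem_iUnion] at hτ
    obtain ⟨σ, hσA, hτF⟩ := hτ
    rcases hτF with h | h
    · obtain ⟨hτK, ρ, hρ, hτρ⟩ := h
      simp only [Set.mem_singleton_iff] at hρ
      exact ⟨hτK, σ, hσA, hρ ▸ hτρ⟩
    · exact subset_cl_of_subset hAK (mv_subset_of_compat hcomp hσA h)
  · -- Fs 𝒱 (mo A) ∩ cl A ⊆ mo A
    rintro τ ⟨hτF, hτcl⟩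
    simp only [Fs, Set.mem_iUnion] at hτF
    obtain ⟨σ, hσmo, hτF⟩ := hτF
    refine ⟨hτcl, fun hτA => ?_⟩
    rcases hτF with h | h
    · obtain ⟨hτK, ρ, hρ, hτρ⟩ := h
      simp only [Set.mem_singleton_iff] at hρ
      subst hρ
      exact hσmo.2 (mem_A_of_le hconv hτK (hσmo.1) hτρ hτA)
    · have := mv_disjoint_of_compat hcomp hσmo.2
      exact absurd (Set.mem_inter h hτA) (this ▸ Set.notMem_empty τ)
  · rw [cl_diff_mo hAK]

end CDS
end

section
/- Let K be a finite abstract simplicial complex, let S be an isolated invariant set under a multivector field 𝒱 on K, and let 𝒱' be an atomic coarsening of 𝒱 whose merged multivector V satisfies V ∩ S ≠ ∅ and V ⊄ S. Let A := ⟨S ∪ V⟩_{𝒱'}. If S ≠ inv_𝒱(A), then there exists no isolated invariant set S' under 𝒱' for which there is a pair (P, E) that is simultaneously an index pair for S under 𝒱 and an index pair for S' under 𝒱' (equivalently, satisfying inv_𝒱(P \ E) = S and inv_{𝒱'}(P \ E) = S'). -/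
open scoped Classical

namespace CDS

variable {α : Type*} [DecidableEq α]

variable {K : Finset (Finset α)}

set_option linter.unusedSectionVars false in
lemma mv_eq (𝒱 : MVF K) {V : Set (Finset α)} {σ : Finset α}
    (hV : V ∈ 𝒱.vecs) (hσ : σ ∈ V) : mv 𝒱 σ = V := by
  apply Set.eq_of_subset_of_subset
  · rintro τ ⟨W, ⟨hW, hσW⟩, hτW⟩
    rwa [𝒱.disjoint W hW V hV ⟨σ, hσW, hσ⟩] at hτW
  · exact Set.subset_sUnion_of_mem ⟨hV, hσ⟩

lemma invPart_mono (𝒱 : MVF K) {A B : Set (Finset α)} (h : A ⊆ B) :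
    invPart 𝒱 A ⊆ invPart 𝒱 B := by
  rintro σ ⟨ρ, hρ, hA, i, hi⟩
  exact ⟨ρ, hρ, fun j => h (hA j), i, hi⟩

lemma invPart_subset (𝒱 : MVF K) (A : Set (Finset α)) :
    invPart 𝒱 A ⊆ A := by
  rintro σ ⟨ρ, _, hA, i, hi⟩
  exact hi ▸ hA i

/-- If `𝒱'` is an atomic coarsening of `𝒱` with merged multivector `V`,
`V ∩ S ≠ ∅`, `V ⊄ S`, `A = ⟨S ∪ V⟩_𝒱'`, and `S ≠ inv_𝒱(A)`, then no isolated
invariant set `S'` under `𝒱'` shares an index pair with `S`. -/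
theorem impossible_continuation (hK : IsComplex K) (𝒱 𝒱' : MVF K)
    (S : Set (Finset α)) (hS : IsIsolatedInvariantSet 𝒱 S)
    (hco : AtomicRefinement 𝒱 𝒱') (V : Set (Finset α))
    (hV : V ∈ 𝒱'.vecs \ 𝒱.vecs)
    (hVS : (V ∩ S).Nonempty) (hVnS : ¬ V ⊆ S)
    (hne : invPart 𝒱 (hull 𝒱' (S ∪ V)) ≠ S) :
    ¬ ∃ (S' P E : Set (Finset α)), IsIsolatedInvariantSet 𝒱' S' ∧
        IsIndexPair 𝒱 S P E ∧ IsIndexPair 𝒱' S' P E := by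

  rintro ⟨S', P, E, _, ⟨hPcl, hEcl, hEP, _, _, hinv⟩, ⟨_, _, _, hFP', hFE', _⟩⟩
  have hPK : P ⊆ (K : Set (Finset α)) := by
    intro σ hσ; rw [hPcl] at hσ; exact hσ.1
  have hSsub : S ⊆ P \ E := by
    rw [← hinv]; exact invPart_subset 𝒱 _
  -- any 𝒱'-multivector meeting P \ E is contained in P \ E
  have key : ∀ σ ∈ P \ E, ∀ W ∈ 𝒱'.vecs, σ ∈ W → W ⊆ P \ E := by
    intro σ hσ W hW hσW
    have hWmv : mv 𝒱' σ = W := mv_eq 𝒱' hW hσW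
    have hWP : W ⊆ P := by
      intro τ hτ
      apply hFP'
      exact Set.mem_biUnion hσ (Or.inr (hWmv ▸ hτ : τ ∈ mv 𝒱' σ))
    intro τ hτ
    refine ⟨hWP hτ, fun hτE => hσ.2 ?_⟩
    have : σ ∈ Fs 𝒱' E ∩ P := by
      refine ⟨Set.mem_biUnion hτE ?_, hσ.1⟩
      exact Or.inr ((mv_eq 𝒱' hW hτ) ▸ hσW : σ ∈ mv 𝒱' τ)
    exact hFE' this
  have hVsub : V ⊆ P \ E := by
    obtain ⟨σ0, hσ0V, hσ0S⟩ := hVS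
    exact key σ0 (hSsub hσ0S) V hV.1 hσ0V
  have hSV : S ∪ V ⊆ P \ E := Set.union_subset hSsub hVsub
  have hPEK : P \ E ⊆ (K : Set (Finset α)) := fun σ hσ => hPK hσ.1
  have hConv : IsConvex K (P \ E) := by
    intro σ hσ τ hτ ρ hρK hσρ hρτ
    have hρP : ρ ∈ P := by
      rw [hPcl]; exact ⟨hρK, τ, hτ.1, hρτ⟩
    refine ⟨hρP, fun hρE => hσ.2 ?_⟩
    rw [hEcl]; exact ⟨hPK hσ.1, ρ, hρE, hσρ⟩
  have hComp : IsCompatible 𝒱' (P \ E) := by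
    refine ⟨{W | W ∈ 𝒱'.vecs ∧ W ⊆ P \ E}, fun W hW => hW.1, ?_⟩
    apply Set.eq_of_subset_of_subset
    · intro σ hσ
      obtain ⟨W, hW, hσW⟩ := 𝒱'.cover σ (hPEK hσ)
      exact ⟨W, ⟨hW, key σ hσ W hW hσW⟩, hσW⟩
    · rintro σ ⟨W, hW, hσW⟩
      exact hW.2 hσW
  have hA : hull 𝒱' (S ∪ V) ⊆ P \ E :=
    Set.sInter_subset_of_mem ⟨hPEK, hConv, hComp, hSV⟩
  have hSA : S ⊆ hull 𝒱' (S ∪ V) := by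
    intro σ hσ
    rintro B ⟨_, _, _, hB⟩
    exact hB (Or.inl hσ)
  apply hne
  apply Set.eq_of_subset_of_subset
  · exact (invPart_mono 𝒱 hA).trans hinv.subset
  · calc S = invPart 𝒱 S := hS.1.symm
      _ ⊆ invPart 𝒱 (hull 𝒱' (S ∪ V)) := invPart_mono 𝒱 hSA


end CDS
end

section
/- Let K be a finite abstract simplicial complex, let S be an isolated invariant set under a multivector field 𝒱 on K, and let 𝒱' be a multivector field on K that is either an atomic refinement of 𝒱, or an atomic coarsening of 𝒱 whose merged multivector V satisfies V ⊆ S or V ∩ S = ∅. Let S' := inv_{𝒱'}(S). If S'' is an isolated invariant set under 𝒱' for which there exists a pair (P, E) that is simultaneously an index pair for S under 𝒱 and an index pair for S'' under 𝒱', then S' ⊆ S''; moreover, if in addition S'' ⊆ S, then S' = S''. -/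
open scoped Classical

namespace CDS

variable {α : Type*} [DecidableEq α]

variable {K : Finset (Finset α)}

/-- Minimality of `S' = inv_𝒱'(S)` in Steps (a)-(c) of the Tracking Protocol:
if `𝒱'` is an atomic refinement of `𝒱`, or an atomic coarsening whose merged
multivector `V` satisfies `V ⊆ S` or `V ∩ S = ∅`, then any isolated invariant
set `S''` under `𝒱'` sharing an index pair with `S` contains `S'`, and if
moreover `S'' ⊆ S` then `S' = S''`. -/
theorem tracked_set_minimal (hK : IsComplex K) (𝒱 𝒱' : MVF K)
    (S : Set (Finset α)) (hS : IsIsolatedInvariantSet 𝒱 S)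
    (hcase : AtomicRefinement 𝒱' 𝒱 ∨
      (AtomicRefinement 𝒱 𝒱' ∧
        ∃ V ∈ 𝒱'.vecs \ 𝒱.vecs, V ⊆ S ∨ V ∩ S = ∅)) :
    ∀ S'' P E : Set (Finset α), IsIsolatedInvariantSet 𝒱' S'' →
      IsIndexPair 𝒱 S P E → IsIndexPair 𝒱' S'' P E →
      invPart 𝒱' S ⊆ S'' ∧ (S'' ⊆ S → invPart 𝒱' S = S'') := by
  intro S'' P E hS'' hIP hIP'
  have hmono : ∀ (𝒲 : MVF K) (A B : Set (Finset α)), A ⊆ B →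
      invPart 𝒲 A ⊆ invPart 𝒲 B := by
    rintro 𝒲 A B hAB σ ⟨ρ, hess, hin, i, hi⟩
    exact ⟨ρ, hess, fun j => hAB (hin j), i, hi⟩
  have hsub : ∀ (𝒲 : MVF K) (A : Set (Finset α)), invPart 𝒲 A ⊆ A := by
    rintro 𝒲 A σ ⟨ρ, _, hin, i, hi⟩
    exact hi ▸ hin i
  have hSsub : S ⊆ P \ E := hIP.2.2.2.2.2 ▸ hsub 𝒱 (P \ E)
  have h1 : invPart 𝒱' S ⊆ S'' := by
    have := hmono 𝒱' S (P \ E) hSsub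
    rwa [hIP'.2.2.2.2.2] at this
  refine ⟨h1, fun hS''S => le_antisymm h1 ?_⟩
  have : invPart 𝒱' S'' ⊆ invPart 𝒱' S := hmono 𝒱' S'' S hS''S
  rwa [hS''.1] at this

end CDS
end

section
/- Let K be a finite abstract simplicial complex, 𝒱 a multivector field on K, S an isolated invariant set under 𝒱, and N an isolating set for S. If (P, E) is an index pair for S in N under 𝒱, then (P, E) is an index pair for S under 𝒱. -/
open scoped Classical

namespace CDS

variable {α : Type*} [DecidableEq α]

variable {K : Finset (Finset α)}

/-- Every index pair for `S` in `N` is an index pair for `S`. -/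
theorem indexPairIn_isIndexPair (hK : IsComplex K) (𝒱 : MVF K)
    (S N P E : Set (Finset α)) (hS : IsIsolatedInvariantSet 𝒱 S)
    (hN : Isolates 𝒱 N S) (hPE : IsIndexPairIn 𝒱 N S P E) :
    IsIndexPair 𝒱 S P E := by
  obtain ⟨hPc, hEc, hEP, hF1, hF2, hF3, hInv⟩ := hPE
  have hPK : P ⊆ (K : Set (Finset α)) := by
    rw [hPc]; intro σ hσ; exact hσ.1
  have hself : ∀ σ ∈ P, σ ∈ Fv 𝒱 σ := by
    intro σ hσ
    exact Or.inl ⟨hPK hσ, σ, Set.mem_singleton σ, subset_rfl⟩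
  have hPEN : P \ E ⊆ N := by
    intro σ hσ
    exact hF1 (Set.mem_biUnion hσ (hself σ hσ.1))
  refine ⟨hPc, hEc, hEP, ?_, ?_, hInv⟩
  · intro τ hτ
    obtain ⟨σ, hσ, hτF⟩ := Set.mem_iUnion₂.mp hτ
    have hτN : τ ∈ N := hF1 hτ
    exact hF3 ⟨Set.mem_biUnion hσ.1 hτF, hτN⟩
  · rintro τ ⟨hτF, hτP⟩
    by_cases h : τ ∈ E
    · exact h
    · exact hF2 ⟨hτF, hPEN ⟨hτP, h⟩⟩

end CDS
end
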